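/- Let σ_e > 0, σ_s > 0, δ ≥ 0, M > 0 be constants with σ_s > δ, and let Γ ∈ ℝ^{q×q} be a symmetric positive-definite matrix. Let e : [0,∞) → ℝⁿ and θ̃ : [0,∞) → ℝ^q be locally absolutely continuous functions, let P : [0,∞) → ℝ^{n×q} be a measurable matrix-valued function with ‖P(t)‖ ≤ M for all t, let d : [0,∞) → ℝⁿ be measurable with ‖d(t)‖ ≤ δ for all t, and let s : [0,∞) → ℝⁿ be measurable with s(t) ∈ K[sgn](e(t)) for all t. Suppose that for almost every t ≥ 0 the closed-loop dynamics hold: ė(t) = P(t)θ̃(t) + d(t) − σ_e e(t) − σ_s s(t), and the adaptation law holds: θ̃̇(t) = −Γ P(t)ᵀ e(t). Then, with z(t) = (e(t), θ̃(t)), α₁ = (1/2)·min(1, λ_min(Γ⁻¹)) and α₂ = (1/2)·max(1, λ_max(Γ⁻¹)): (i) ‖z(t)‖ ≤ √(α₂/α₁)·‖z(0)‖ for all t ≥ 0 (in particular z is bounded), and (ii) ‖e(t)‖ → 0 as t → ∞. -/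

import Mathlib

/-!
Along the closed loop the Lyapunov function `V = ‖e‖² + θ̃ᵀΓ⁻¹θ̃` is absolutely continuous, and in
its derivative the coupling terms `eᵀPθ̃` and `θ̃ᵀΓ⁻¹(−ΓPᵀe)` cancel, while the Filippov sign term
dominates the disturbance: `⟪e, s⟫ = ‖e‖₁ ≥ ‖e‖` and `⟪e, d⟫ ≤ δ‖e‖`. Hence
`V̇ ≤ −2(σ_s − δ)‖e‖` a.e., and integrating gives `V(t) + 2(σ_s − δ) ∫₀ᵗ ‖e‖ ≤ V(0)`.
The eigenvalues of `Γ⁻¹` squeeze `V` between `2α₁‖z‖²` and `2α₂‖z‖²`, which is (i). So `z` is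
bounded, `ė` is essentially bounded and `e` is Lipschitz, while `∫₀^∞ ‖e‖ < ∞`; Barbalat's lemma
then gives `e(t) → 0`.
-/

open MeasureTheory Matrix

/-- The Filippov set-valued sign map `K[sgn]`: `s ∈ K[sgn](e)` iff `sᵢ = sign(eᵢ)` whenever
`eᵢ ≠ 0` and `sᵢ ∈ [−1,1]` whenever `eᵢ = 0`. -/
def filippovSgn {n : ℕ} (e : EuclideanSpace ℝ (Fin n)) : Set (EuclideanSpace ℝ (Fin n)) :=
  {s | ∀ i, (e i ≠ 0 → s i = Real.sign (e i)) ∧ (e i = 0 → s i ∈ Set.Icc (-1 : ℝ) 1)}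

open Set Filter Topology intervalIntegral
open scoped NNReal RealInnerProductSpace

section NormedSpace

variable {E F : Type*} [NormedAddCommGroup E] [NormedSpace ℝ E] [NormedAddCommGroup F]
  [NormedSpace ℝ F]

/-- `u` is absolutely continuous on `[a, b]` with a.e. derivative `f`. -/
def IsPrimitiveOn (u f : ℝ → E) (a b : ℝ) : Prop :=
  IntervalIntegrable f volume a b ∧ ∀ x ∈ uIcc a b, u x = u a + ∫ y in a..x, f y

namespace IsPrimitiveOn

variable {u v f g : ℝ → E} {a b : ℝ}

theorem mono (h : IsPrimitiveOn u f a b) {c : ℝ} (hc : c ∈ uIcc a b) : IsPrimitiveOn u f a c :=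
  ⟨h.1.mono_set (uIcc_subset_uIcc_left hc), fun x hx => h.2 x (uIcc_subset_uIcc_left hc hx)⟩

theorem sub_eq_integral (h : IsPrimitiveOn u f a b) {x y : ℝ} (hx : x ∈ uIcc a b)
    (hy : y ∈ uIcc a b) : u y - u x = ∫ z in x..y, f z := by
  rw [h.2 y hy, h.2 x hx, add_sub_add_left_eq_sub, integral_interval_sub_left
    (h.1.mono_set (uIcc_subset_uIcc_left hy)) (h.1.mono_set (uIcc_subset_uIcc_left hx))]

theorem continuousOn (h : IsPrimitiveOn u f a b) : ContinuousOn u (uIcc a b) :=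
  (continuousOn_const.add (continuousOn_primitive_interval
    ((intervalIntegrable_iff' (μ := volume)).1 h.1))).congr h.2

theorem add (hu : IsPrimitiveOn u f a b) (hv : IsPrimitiveOn v g a b) :
    IsPrimitiveOn (fun x => u x + v x) (fun x => f x + g x) a b :=
  ⟨hu.1.add hv.1, fun x hx => by
    beta_reduce
    rw [hu.2 x hx, hv.2 x hx, integral_add (hu.mono hx).1 (hv.mono hx).1]; abel⟩

theorem sum {ι : Type*} (s : Finset ι) {u f : ι → ℝ → E}
    (h : ∀ i ∈ s, IsPrimitiveOn (u i) (f i) a b) :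
    IsPrimitiveOn (fun x => ∑ i ∈ s, u i x) (fun x => ∑ i ∈ s, f i x) a b := by
  refine ⟨by simpa only [← Finset.sum_apply] using
    IntervalIntegrable.sum s fun i hi => (h i hi).1, fun x hx => ?_⟩
  rw [integral_finsetSum fun i hi => ((h i hi).mono hx).1, ← Finset.sum_add_distrib]
  exact Finset.sum_congr rfl fun i hi => (h i hi).2 x hx

theorem map [CompleteSpace E] [CompleteSpace F] (h : IsPrimitiveOn u f a b) (L : E →L[ℝ] F) :
    IsPrimitiveOn (fun x => L (u x)) (fun x => L (f x)) a b :=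
  ⟨⟨L.integrable_comp h.1.1, L.integrable_comp h.1.2⟩, fun x hx => by
    beta_reduce
    rw [h.2 x hx, map_add, L.intervalIntegral_comp_comm (h.mono hx).1]⟩

theorem mul {u v f g : ℝ → ℝ} (hu : IsPrimitiveOn u f a b) (hv : IsPrimitiveOn v g a b) :
    IsPrimitiveOn (fun x => u x * v x) (fun x => f x * v x + u x * g x) a b := by
  suffices key : ∀ {b}, IsPrimitiveOn u f a b → IsPrimitiveOn v g a b →
      u b * v b = u a * v a + ∫ x in a..b, f x * v x + u x * g x from
    ⟨(hu.1.mul_continuousOn hv.continuousOn).add (hv.1.continuousOn_mul hu.continuousOn),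
      fun x hx => key (hu.mono hx) (hv.mono hx)⟩
  intro b hu hv
  have hac {u f : ℝ → ℝ} (hu : IsPrimitiveOn u f a b) :
      AbsolutelyContinuousOnInterval (fun x => u a + ∫ y in a..x, f y) a b :=
    (LipschitzWith.const (u a)).lipschitzOnWith.absolutelyContinuousOnInterval.add
      (hu.1.absolutelyContinuousOnInterval_intervalIntegral left_mem_uIcc)
  have hderiv {u f : ℝ → ℝ} (hu : IsPrimitiveOn u f a b) :
      ∀ᵐ x, x ∈ uIoc a b → deriv (fun x => u a + ∫ y in a..x, f y) x = f x := by
    filter_upwards [hu.1.ae_hasDerivAt_integral] with x hx hxab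
    exact (((hx (uIoc_subset_uIcc hxab)) a left_mem_uIcc).const_add (u a)).deriv
  have hibp := (hac hu).integral_deriv_mul_eq_sub (hac hv)
  simp only [integral_same, add_zero] at hibp
  rw [← hu.2 b right_mem_uIcc, ← hv.2 b right_mem_uIcc] at hibp
  rw [← sub_eq_iff_eq_add', ← hibp]
  refine integral_congr_ae ?_
  filter_upwards [hderiv hu, hderiv hv] with x hfx hgx hx
  rw [hfx hx, hgx hx, ← hu.2 x (uIoc_subset_uIcc hx), ← hv.2 x (uIoc_subset_uIcc hx)]

theorem sub_le_integral {u f g : ℝ → ℝ} (hu : IsPrimitiveOn u f a b) (hab : a ≤ b)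
    (hg : IntervalIntegrable g volume a b) (hfg : ∀ᵐ x, x ∈ Icc a b → f x ≤ g x) :
    u b - u a ≤ ∫ x in a..b, g x := by
  rw [hu.sub_eq_integral left_mem_uIcc right_mem_uIcc]
  exact integral_mono_ae_restrict hab hu.1 hg ((ae_restrict_iff' measurableSet_Icc).2 hfg)

theorem norm_sub_le {C : ℝ} (hu : IsPrimitiveOn u f a b) {x y : ℝ} (hx : x ∈ uIcc a b)
    (hy : y ∈ uIcc a b) (hf : ∀ᵐ z, z ∈ uIcc a b → ‖f z‖ ≤ C) : ‖u y - u x‖ ≤ C * |y - x| := by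
  rw [hu.sub_eq_integral hx hy]
  refine norm_integral_le_of_norm_le_const_ae ?_
  filter_upwards [hf] with z hz hzxy
  exact hz (uIcc_subset_uIcc hx hy (uIoc_subset_uIcc hzxy))

end IsPrimitiveOn

theorem lipschitzOnWith_Ici_of_isPrimitiveOn {u f : ℝ → E} {a : ℝ} {K : ℝ≥0}
    (hu : ∀ b, a ≤ b → IsPrimitiveOn u f a b) (hf : ∀ᵐ x, a ≤ x → ‖f x‖ ≤ K) :
    LipschitzOnWith K u (Ici a) := by
  refine LipschitzOnWith.of_dist_le_mul fun x (hx : a ≤ x) y (hy : a ≤ y) => ?_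
  have hab : a ≤ max x y := hx.trans (le_max_left x y)
  have hmem {z : ℝ} (ha : a ≤ z) (hz : z ≤ max x y) : z ∈ uIcc a (max x y) := by
    rw [uIcc_of_le hab]; exact ⟨ha, hz⟩
  rw [dist_eq_norm, Real.dist_eq]
  refine (hu _ hab).norm_sub_le (hmem hy (le_max_right x y)) (hmem hx (le_max_left x y)) ?_
  filter_upwards [hf] with z hz hzab
  exact hz (by rw [uIcc_of_le hab] at hzab; exact hzab.1)

theorem LipschitzOnWith.mul_norm_le_norm_integral_add [CompleteSpace E] {g : ℝ → E} {K : ℝ≥0}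
    {a : ℝ} (hg : LipschitzOnWith K g (Ici a)) {t d : ℝ} (ht : a ≤ t) (hd : 0 ≤ d) :
    d * ‖g t‖ ≤ ‖∫ x in t..t + d, g x‖ + K * d ^ 2 := by
  have hsub : uIcc t (t + d) ⊆ Ici a := by
    rw [uIcc_of_le (by linarith)]; exact fun x hx => ht.trans hx.1
  have hint : IntervalIntegrable g volume t (t + d) :=
    (hg.continuousOn.mono hsub).intervalIntegrable
  have hdev : ∀ x ∈ uIoc t (t + d), ‖g t - g x‖ ≤ K * d := fun x hx => by
    have hx' := uIoc_subset_uIcc hx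
    rw [← dist_eq_norm]
    refine (hg.dist_le_mul t (hsub left_mem_uIcc) x (hsub hx')).trans ?_
    rw [uIcc_of_le (by linarith)] at hx'
    gcongr
    rw [Real.dist_eq, abs_sub_comm, abs_of_nonneg (by linarith [hx'.1])]
    linarith [hx'.2]
  calc d * ‖g t‖ = ‖∫ x in t..t + d, g t‖ := by
        rw [intervalIntegral.integral_const, add_sub_cancel_left, norm_smul,
          Real.norm_of_nonneg hd]
    _ = ‖(∫ x in t..t + d, g x) + ∫ x in t..t + d, (g t - g x)‖ := by
        rw [← integral_add hint (intervalIntegrable_const.sub hint)]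
        simp only [add_sub_cancel]
    _ ≤ ‖∫ x in t..t + d, g x‖ + K * d * |t + d - t| := by
        grw [norm_add_le, norm_integral_le_of_norm_le_const hdev]
    _ = ‖∫ x in t..t + d, g x‖ + K * d ^ 2 := by
        rw [add_sub_cancel_left, abs_of_nonneg hd]; ring

theorem tendsto_intervalIntegral_add_of_integrableOn_Ioi {g : ℝ → E} {a : ℝ}
    (hint : IntegrableOn g (Ioi a)) (d : ℝ) :
    Tendsto (fun t => ∫ x in t..t + d, g x) atTop (𝓝 0) := by
  have hlim := intervalIntegral_tendsto_integral_Ioi a hint tendsto_id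
  have hlim_d := intervalIntegral_tendsto_integral_Ioi a hint
    (tendsto_atTop_add_const_right _ d tendsto_id)
  rw [← sub_self (∫ x in Ioi a, g x)]
  refine (hlim_d.sub hlim).congr' ?_
  filter_upwards [eventually_ge_atTop a, eventually_ge_atTop (a - d)] with t ht htd
  have hii {b : ℝ} (hb : a ≤ b) : IntervalIntegrable g volume a b :=
    (intervalIntegrable_iff_integrableOn_Ioc_of_le hb).2 (hint.mono_set Ioc_subset_Ioi_self)
  dsimp only [id]
  exact integral_interval_sub_left (hii (by linarith)) (hii ht)

theorem tendsto_atTop_zero_of_lipschitzOnWith_of_integrableOn_Ioi [CompleteSpace E] {g : ℝ → E}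
    {K : ℝ≥0} {a : ℝ} (hg : LipschitzOnWith K g (Ici a)) (hint : IntegrableOn g (Ioi a)) :
    Tendsto g atTop (𝓝 0) := by
  refine Metric.tendsto_nhds.2 fun ε hε => ?_
  set d := ε / (2 * (K + 1)) with hd
  have hdpos : 0 < d := by positivity
  have hKd : K * d ≤ ε / 2 := by
    rw [hd, mul_div_assoc', div_le_div_iff₀ (by positivity) two_pos]
    nlinarith [K.coe_nonneg]
  filter_upwards [Metric.tendsto_nhds.1 (tendsto_intervalIntegral_add_of_integrableOn_Ioi hint d)
    (d * ε / 2) (by positivity), eventually_ge_atTop a] with t hsmall ht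
  rw [dist_zero_right] at hsmall ⊢
  have hlocal := hg.mul_norm_le_norm_integral_add ht hdpos.le
  have hlt : d * ‖g t‖ < d * ε := by nlinarith
  exact lt_of_mul_lt_mul_left hlt hdpos.le

theorem tendsto_norm_atTop_zero_of_isPrimitiveOn [CompleteSpace E] {u f : ℝ → E} {a K C : ℝ}
    (hu : ∀ b, a ≤ b → IsPrimitiveOn u f a b) (hf : ∀ᵐ x, a ≤ x → ‖f x‖ ≤ K)
    (hC : ∀ b, a ≤ b → ∫ x in a..b, ‖u x‖ ≤ C) : Tendsto (fun t => ‖u t‖) atTop (𝓝 0) := by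
  have hlip : LipschitzOnWith K.toNNReal u (Ici a) :=
    lipschitzOnWith_Ici_of_isPrimitiveOn hu <| by
      filter_upwards [hf] with x hx hax using (hx hax).trans (Real.le_coe_toNNReal K)
  have hint : IntegrableOn u (Ioi a) :=
    integrableOn_Ioi_of_intervalIntegral_norm_bounded C a
      (fun b => ((hlip.continuousOn.mono Icc_subset_Ici_self).integrableOn_Icc).mono_set
        Ioc_subset_Icc_self) tendsto_id (eventually_ge_atTop a |>.mono hC)
  exact tendsto_zero_iff_norm_tendsto_zero.1
    (tendsto_atTop_zero_of_lipschitzOnWith_of_integrableOn_Ioi hlip hint)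

end NormedSpace

section InnerProductSpace

variable {E : Type*} [NormedAddCommGroup E] [InnerProductSpace ℝ E] [FiniteDimensional ℝ E]
  {u v f g : ℝ → E} {a b : ℝ}

theorem IsPrimitiveOn.inner (hu : IsPrimitiveOn u f a b) (hv : IsPrimitiveOn v g a b) :
    IsPrimitiveOn (fun x => ⟪u x, v x⟫) (fun x => ⟪f x, v x⟫ + ⟪u x, g x⟫) a b := by
  set B := stdOrthonormalBasis ℝ E
  have hcoord := IsPrimitiveOn.sum Finset.univ fun i _ =>
    (hu.map (innerSL ℝ (B i))).mul (hv.map (innerSL ℝ (B i)))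
  convert hcoord using 1 <;> funext x
  · rw [← B.sum_inner_mul_inner]
    simp only [innerSL_apply_apply, real_inner_comm (u x)]
  · rw [← B.sum_inner_mul_inner, ← B.sum_inner_mul_inner, ← Finset.sum_add_distrib]
    simp only [innerSL_apply_apply, real_inner_comm (u x), real_inner_comm (f x)]

theorem IsPrimitiveOn.norm_sq (hu : IsPrimitiveOn u f a b) :
    IsPrimitiveOn (fun x => ‖u x‖ ^ 2) (fun x => 2 * ⟪u x, f x⟫) a b := by
  convert hu.inner hu using 2 with x x
  · exact (real_inner_self_eq_norm_sq _).symm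
  · rw [real_inner_comm (u x)]; ring

theorem IsPrimitiveOn.inner_map_self {A : E →ₗ[ℝ] E} (hA : A.IsSymmetric)
    (hu : IsPrimitiveOn u f a b) :
    IsPrimitiveOn (fun x => ⟪u x, A (u x)⟫) (fun x => 2 * ⟪u x, A (f x)⟫) a b := by
  convert hu.inner (hu.map (LinearMap.toContinuousLinearMap A)) using 1 <;> funext x <;>
    simp only [LinearMap.coe_toContinuousLinearMap']
  rw [← hA, real_inner_comm (f x)]; ring

end InnerProductSpace

section Filippov

variable {n : ℕ} {x s : EuclideanSpace ℝ (Fin n)}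

theorem mul_eq_abs_of_mem_filippovSgn (hs : s ∈ filippovSgn x) (i : Fin n) :
    x i * s i = |x i| := by
  rcases eq_or_ne (x i) 0 with h | h
  · simp [h]
  rw [(hs i).1 h]
  rcases h.lt_or_gt with h | h
  · rw [Real.sign_of_neg h, abs_of_neg h]; ring
  · rw [Real.sign_of_pos h, abs_of_pos h]; ring

theorem abs_le_one_of_mem_filippovSgn (hs : s ∈ filippovSgn x) (i : Fin n) : |s i| ≤ 1 := by
  rcases eq_or_ne (x i) 0 with h | h
  · exact abs_le.2 ((hs i).2 h)
  rw [(hs i).1 h]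
  rcases h.lt_or_gt with h | h
  · simp [Real.sign_of_neg h]
  · simp [Real.sign_of_pos h]

theorem norm_le_inner_of_mem_filippovSgn (hs : s ∈ filippovSgn x) : ‖x‖ ≤ ⟪x, s⟫ := by
  have hinner : ⟪x, s⟫ = ∑ i, |x i| := by
    simp only [PiLp.inner_apply, RCLike.inner_apply, conj_trivial,
      ← mul_eq_abs_of_mem_filippovSgn hs, mul_comm]
  have hsum : 0 ≤ ∑ i, |x i| := Finset.sum_nonneg fun i _ => abs_nonneg _
  rw [hinner, EuclideanSpace.norm_eq, Real.sqrt_le_left hsum]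
  simpa only [Real.norm_eq_abs, sq_abs] using
    Finset.sum_sq_le_sq_sum_of_nonneg fun i _ => abs_nonneg (x i)

theorem norm_le_sqrt_of_mem_filippovSgn (hs : s ∈ filippovSgn x) : ‖s‖ ≤ √n := by
  rw [EuclideanSpace.norm_eq]
  gcongr
  calc ∑ i, ‖s i‖ ^ 2 ≤ ∑ _i : Fin n, (1 : ℝ) := by
        gcongr with i
        rw [Real.norm_eq_abs, sq_le_one_iff_abs_le_one, abs_abs]
        exact abs_le_one_of_mem_filippovSgn hs i
    _ = n := by simp

end Filippov

theorem Matrix.IsHermitian.inner_toEuclideanLin_self_eq_sum {ι : Type*} [Fintype ι]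
    [DecidableEq ι] {A : Matrix ι ι ℝ} (hA : A.IsHermitian) (x : EuclideanSpace ℝ ι) :
    ⟪x, toEuclideanLin A x⟫ = ∑ i, hA.eigenvalues i * ⟪hA.eigenvectorBasis i, x⟫ ^ 2 := by
  set b := hA.eigenvectorBasis
  have hAb (i) : toEuclideanLin A (b i) = hA.eigenvalues i • b i := by
    ext j; simpa using congrFun (hA.mulVec_eigenvectorBasis i) j
  rw [← b.sum_inner_mul_inner x]
  refine Finset.sum_congr rfl fun i _ => ?_
  rw [← isSymmetric_toEuclideanLin_iff.2 hA (b i) x, hAb, real_inner_smul_left,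
    real_inner_comm x]
  ring

theorem Matrix.IsHermitian.iInf_eigenvalues_mul_norm_sq_le {ι : Type*} [Fintype ι]
    [DecidableEq ι] {A : Matrix ι ι ℝ} (hA : A.IsHermitian) (x : EuclideanSpace ℝ ι) :
    (⨅ i, hA.eigenvalues i) * ‖x‖ ^ 2 ≤ ⟪x, toEuclideanLin A x⟫ := by
  rw [hA.inner_toEuclideanLin_self_eq_sum, ← hA.eigenvectorBasis.sum_sq_inner_right x,
    Finset.mul_sum]
  gcongr with i
  exact ciInf_le (Set.finite_range _).bddBelow i

theorem Matrix.IsHermitian.inner_le_iSup_eigenvalues_mul_norm_sq {ι : Type*} [Fintype ι]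
    [DecidableEq ι] {A : Matrix ι ι ℝ} (hA : A.IsHermitian) (x : EuclideanSpace ℝ ι) :
    ⟪x, toEuclideanLin A x⟫ ≤ (⨆ i, hA.eigenvalues i) * ‖x‖ ^ 2 := by
  rw [hA.inner_toEuclideanLin_self_eq_sum, ← hA.eigenvectorBasis.sum_sq_inner_right x,
    Finset.mul_sum]
  gcongr with i
  exact le_ciSup (Set.finite_range _).bddAbove i

theorem Matrix.inner_toEuclideanLin_transpose {m n : Type*} [Fintype m] [DecidableEq m]
    [Fintype n] [DecidableEq n] (A : Matrix m n ℝ) (x : EuclideanSpace ℝ m)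
    (y : EuclideanSpace ℝ n) : ⟪toEuclideanLin Aᵀ x, y⟫ = ⟪x, toEuclideanLin A y⟫ := by
  rw [← conjTranspose_eq_transpose_of_trivial, toEuclideanLin_conjTranspose_eq_adjoint,
    LinearMap.adjoint_inner_left]

theorem sqrt_le_sqrt_div_mul_sqrt {a₁ a₂ x y : ℝ} (ha₁ : 0 < a₁) (hy : 0 ≤ y)
    (h : a₁ * x ≤ a₂ * y) : √x ≤ √(a₂ / a₁) * √y := by
  rw [← Real.sqrt_mul' _ hy]
  exact Real.sqrt_le_sqrt (by rwa [div_mul_eq_mul_div, le_div_iff₀ ha₁, mul_comm])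

section ClosedLoop

/-- Twice the Lyapunov function `V(e, θ̃) = ½‖e‖² + ½ θ̃ᵀΓ⁻¹θ̃` of the paper. -/
noncomputable def adaptiveLyapunov {n q : ℕ} (Γ : Matrix (Fin q) (Fin q) ℝ) (e : EuclideanSpace ℝ (Fin n))
    (θ : EuclideanSpace ℝ (Fin q)) : ℝ :=
  ‖e‖ ^ 2 + ⟪θ, toEuclideanLin Γ⁻¹ θ⟫

variable {n q : ℕ} {σe σs δ : ℝ} {Γ : Matrix (Fin q) (Fin q) ℝ}

theorem min_mul_le_adaptiveLyapunov (hΓ : Γ⁻¹.IsHermitian) (e : EuclideanSpace ℝ (Fin n))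
    (θ : EuclideanSpace ℝ (Fin q)) :
    min 1 (⨅ i, hΓ.eigenvalues i) * (‖e‖ ^ 2 + ‖θ‖ ^ 2) ≤ adaptiveLyapunov Γ e θ := by
  have := hΓ.iInf_eigenvalues_mul_norm_sq_le θ
  rw [adaptiveLyapunov, mul_add]
  gcongr
  · exact mul_le_of_le_one_left (sq_nonneg _) (min_le_left _ _)
  · exact (mul_le_mul_of_nonneg_right (min_le_right _ _) (sq_nonneg _)).trans this

theorem adaptiveLyapunov_le_max_mul (hΓ : Γ⁻¹.IsHermitian) (e : EuclideanSpace ℝ (Fin n))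
    (θ : EuclideanSpace ℝ (Fin q)) :
    adaptiveLyapunov Γ e θ ≤ max 1 (⨆ i, hΓ.eigenvalues i) * (‖e‖ ^ 2 + ‖θ‖ ^ 2) := by
  have := hΓ.inner_le_iSup_eigenvalues_mul_norm_sq θ
  rw [adaptiveLyapunov, mul_add]
  gcongr
  · exact le_mul_of_one_le_left (sq_nonneg _) (le_max_left _ _)
  · exact this.trans (mul_le_mul_of_nonneg_right (le_max_right _ _) (sq_nonneg _))

theorem adaptiveLyapunov_nonneg (hΓ : Γ.PosDef) (e : EuclideanSpace ℝ (Fin n))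
    (θ : EuclideanSpace ℝ (Fin q)) : 0 ≤ adaptiveLyapunov Γ e θ :=
  add_nonneg (sq_nonneg _) <| (mul_nonneg (Real.iInf_nonneg fun i => (hΓ.inv.eigenvalues_pos i).le)
    (sq_nonneg _)).trans (hΓ.inv.1.iInf_eigenvalues_mul_norm_sq_le θ)

theorem inner_closedLoop_add_inner_adaptationLaw_le (hσe : 0 ≤ σe) (hσs : 0 ≤ σs)
    (hΓ : IsUnit Γ.det) (P : Matrix (Fin n) (Fin q) ℝ) (θ : EuclideanSpace ℝ (Fin q))
    {e d s : EuclideanSpace ℝ (Fin n)} (hd : ‖d‖ ≤ δ) (hs : s ∈ filippovSgn e) :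
    ⟪e, toEuclideanLin P θ + d - σe • e - σs • s⟫
        + ⟪θ, toEuclideanLin Γ⁻¹ (-toEuclideanLin (Γ * Pᵀ) e)⟫ ≤ -(σs - δ) * ‖e‖ := by
  have hcancel : ⟪θ, toEuclideanLin Γ⁻¹ (-toEuclideanLin (Γ * Pᵀ) e)⟫
      = -⟪e, toEuclideanLin P θ⟫ := by
    have : toEuclideanLin Γ⁻¹ (toEuclideanLin (Γ * Pᵀ) e) = toEuclideanLin Pᵀ e := by
      simp [toLpLin_apply, mulVec_mulVec, nonsing_inv_mul_cancel_left _ _ hΓ]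
    rw [map_neg, inner_neg_right, this, ← Matrix.inner_toEuclideanLin_transpose,
      transpose_transpose, real_inner_comm]
  have hde : ⟪e, d⟫ ≤ δ * ‖e‖ :=
    (real_inner_le_norm _ _).trans (by rw [mul_comm]; gcongr)
  have hse := norm_le_inner_of_mem_filippovSgn hs
  rw [hcancel, inner_sub_right, inner_sub_right, inner_add_right, real_inner_smul_right,
    real_inner_smul_right, real_inner_self_eq_norm_sq]
  nlinarith [mul_le_mul_of_nonneg_left hse hσs, mul_nonneg hσe (sq_nonneg ‖e‖)]

theorem norm_closedLoop_le {M : ℝ} (hσe : 0 ≤ σe) (hσs : 0 ≤ σs)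
    {P : Matrix (Fin n) (Fin q) ℝ} (hP : ∀ v, ‖toEuclideanLin P v‖ ≤ M * ‖v‖)
    (θ : EuclideanSpace ℝ (Fin q))
    {e d s : EuclideanSpace ℝ (Fin n)} (hd : ‖d‖ ≤ δ) (hs : s ∈ filippovSgn e) :
    ‖toEuclideanLin P θ + d - σe • e - σs • s‖ ≤ M * ‖θ‖ + δ + σe * ‖e‖ + σs * √n := by
  grw [norm_sub_le, norm_sub_le, norm_add_le, norm_smul, norm_smul, hP θ, hd,
    norm_le_sqrt_of_mem_filippovSgn hs, Real.norm_of_nonneg hσe, Real.norm_of_nonneg hσs]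

theorem adaptiveLyapunov_add_integral_le (hσe : 0 ≤ σe) (hσs : 0 ≤ σs) (hΓ : Γ.IsHermitian)
    (hΓdet : IsUnit Γ.det) {e e' d s : ℝ → EuclideanSpace ℝ (Fin n)}
    {θ θ' : ℝ → EuclideanSpace ℝ (Fin q)} {P : ℝ → Matrix (Fin n) (Fin q) ℝ} {t : ℝ}
    (ht : 0 ≤ t) (he : IsPrimitiveOn e e' 0 t) (hθ : IsPrimitiveOn θ θ' 0 t)
    (hd : ∀ τ, 0 ≤ τ → ‖d τ‖ ≤ δ) (hs : ∀ τ, 0 ≤ τ → s τ ∈ filippovSgn (e τ))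
    (hdyn : ∀ᵐ τ, 0 ≤ τ → e' τ = toEuclideanLin (P τ) (θ τ) + d τ - σe • e τ - σs • s τ)
    (hadapt : ∀ᵐ τ, 0 ≤ τ → θ' τ = -toEuclideanLin (Γ * (P τ)ᵀ) (e τ)) :
    adaptiveLyapunov Γ (e t) (θ t) + 2 * (σs - δ) * ∫ τ in 0..t, ‖e τ‖
      ≤ adaptiveLyapunov Γ (e 0) (θ 0) := by
  have hV := he.norm_sq.add (hθ.inner_map_self (isSymmetric_toEuclideanLin_iff.2 hΓ.inv))
  have hdecay := hV.sub_le_integral ht (he.continuousOn.norm.intervalIntegrable.const_mul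
    (-(2 * (σs - δ)))) <| by
    filter_upwards [hdyn, hadapt] with τ hdτ haτ hτ
    rw [hdτ hτ.1, haτ hτ.1]
    linarith [inner_closedLoop_add_inner_adaptationLaw_le hσe hσs hΓdet (P τ) (θ τ) (hd τ hτ.1)
      (hs τ hτ.1)]
  rw [intervalIntegral.integral_const_mul] at hdecay
  unfold adaptiveLyapunov
  linarith

end ClosedLoop

theorem resnet_adaptive_control_asymptotic_tracking_general
    (n q : ℕ) (hq : 0 < q)
    (σe σs δ M : ℝ) (hσe : 0 < σe) (hσs : 0 < σs) (hM : 0 < M)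
    (hgain : δ < σs)
    (Γ : Matrix (Fin q) (Fin q) ℝ) (hΓ : Γ.PosDef)
    (e e' : ℝ → EuclideanSpace ℝ (Fin n)) (θt θt' : ℝ → EuclideanSpace ℝ (Fin q))
    (P : ℝ → Matrix (Fin n) (Fin q) ℝ) (d s : ℝ → EuclideanSpace ℝ (Fin n))
    (hPbound : ∀ t, 0 ≤ t → ∀ v, ‖Matrix.toEuclideanLin (P t) v‖ ≤ M * ‖v‖)
    (hdbound : ∀ t, 0 ≤ t → ‖d t‖ ≤ δ)
    (hsgn : ∀ t, 0 ≤ t → s t ∈ filippovSgn (e t))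
    -- local absolute continuity of `e` and `θ̃`:
    (heInt : ∀ t, 0 ≤ t → IntervalIntegrable e' volume 0 t)
    (hθInt : ∀ t, 0 ≤ t → IntervalIntegrable θt' volume 0 t)
    (heAC : ∀ t, 0 ≤ t → e t = e 0 + ∫ τ in (0 : ℝ)..t, e' τ)
    (hθAC : ∀ t, 0 ≤ t → θt t = θt 0 + ∫ τ in (0 : ℝ)..t, θt' τ)
    -- the closed-loop dynamics and the adaptation law hold for almost every `t ≥ 0`:
    (hdyn : ∀ᵐ t ∂volume, 0 ≤ t →
      e' t = Matrix.toEuclideanLin (P t) (θt t) + d t - σe • e t - σs • s t)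
    (hadapt : ∀ᵐ t ∂volume, 0 ≤ t →
      θt' t = -(Matrix.toEuclideanLin (Γ * (P t)ᵀ) (e t)))
    (α₁ α₂ : ℝ)
    (hα₁ : α₁ = (1 / 2) * min 1 (⨅ i, hΓ.inv.1.eigenvalues i))
    (hα₂ : α₂ = (1 / 2) * max 1 (⨆ i, hΓ.inv.1.eigenvalues i)) :
    (∀ t, 0 ≤ t →
      Real.sqrt (‖e t‖ ^ 2 + ‖θt t‖ ^ 2) ≤
        Real.sqrt (α₂ / α₁) * Real.sqrt (‖e 0‖ ^ 2 + ‖θt 0‖ ^ 2)) ∧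
    Filter.Tendsto (fun t => ‖e t‖) Filter.atTop (nhds 0) := by
  have : Nonempty (Fin q) := ⟨⟨0, hq⟩⟩
  have hΓinv := hΓ.inv.1
  have he (t : ℝ) (ht : 0 ≤ t) : IsPrimitiveOn e e' 0 t :=
    ⟨heInt t ht, fun x hx => heAC x (by rw [uIcc_of_le ht] at hx; exact hx.1)⟩
  have hθ (t : ℝ) (ht : 0 ≤ t) : IsPrimitiveOn θt θt' 0 t :=
    ⟨hθInt t ht, fun x hx => hθAC x (by rw [uIcc_of_le ht] at hx; exact hx.1)⟩
  have hdecay (t : ℝ) (ht : 0 ≤ t) :=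
    adaptiveLyapunov_add_integral_le hσe.le hσs.le hΓ.1 hΓ.det_pos.ne'.isUnit ht (he t ht)
      (hθ t ht) hdbound hsgn hdyn hadapt
  have hmin : 0 < min 1 (⨅ i, hΓinv.eigenvalues i) := by
    obtain ⟨i, hi⟩ := exists_eq_ciInf_of_finite (f := hΓinv.eigenvalues)
    exact lt_min one_pos (hi ▸ hΓ.inv.eigenvalues_pos i)
  have hbound (t : ℝ) (ht : 0 ≤ t) :
      √(‖e t‖ ^ 2 + ‖θt t‖ ^ 2) ≤ √(α₂ / α₁) * √(‖e 0‖ ^ 2 + ‖θt 0‖ ^ 2) := by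
    refine sqrt_le_sqrt_div_mul_sqrt (by rw [hα₁]; positivity) (by positivity) ?_
    have hI : 0 ≤ ∫ τ in 0..t, ‖e τ‖ := integral_nonneg ht fun _ _ => norm_nonneg _
    rw [hα₁, hα₂]
    nlinarith [hdecay t ht, min_mul_le_adaptiveLyapunov hΓinv (e t) (θt t),
      adaptiveLyapunov_le_max_mul hΓinv (e 0) (θt 0), mul_nonneg (sub_pos.2 hgain).le hI]
  set B := √(α₂ / α₁) * √(‖e 0‖ ^ 2 + ‖θt 0‖ ^ 2)
  refine ⟨hbound, tendsto_norm_atTop_zero_of_isPrimitiveOn he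
    (K := M * B + δ + σe * B + σs * √n) (C := adaptiveLyapunov Γ (e 0) (θt 0) / (2 * (σs - δ)))
    ?_ fun t ht => ?_⟩
  · filter_upwards [hdyn] with τ hτ hτ0
    rw [hτ hτ0]
    refine (norm_closedLoop_le hσe.le hσs.le (hPbound τ hτ0) _ (hdbound τ hτ0)
      (hsgn τ hτ0)).trans ?_
    gcongr
    · exact (Real.le_sqrt_of_sq_le (le_add_of_nonneg_left (sq_nonneg _))).trans (hbound τ hτ0)
    · exact (Real.le_sqrt_of_sq_le (le_add_of_nonneg_right (sq_nonneg _))).trans (hbound τ hτ0)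
  · rw [le_div_iff₀ (by linarith)]
    linarith [hdecay t ht, adaptiveLyapunov_nonneg hΓ (e t) (θt t)]

/-- **Theorem 1 (classical-solutions content): Lyapunov-based ResNet adaptive control.**
Under the closed-loop error dynamics `ė = Pθ̃ + d − σ_e e − σ_s s` (a.e., with
`s(t) ∈ K[sgn](e(t))`, `‖P(t)‖ ≤ M`, `‖d(t)‖ ≤ δ < σ_s`) and the adaptation law
`θ̃̇ = −ΓPᵀe` (a.e.), where `e, θ̃` are locally absolutely continuous (represented by the
integral identities below), the concatenated state `z = (e, θ̃)` satisfies
`‖z(t)‖ ≤ √(α₂/α₁)·‖z(0)‖` for all `t ≥ 0` (in particular `z` is bounded), and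
`‖e(t)‖ → 0` as `t → ∞`; here `α₁ = ½min(1, λ_min(Γ⁻¹))`, `α₂ = ½max(1, λ_max(Γ⁻¹))`. -/
theorem resnet_adaptive_control_asymptotic_tracking
    (n q : ℕ) (hq : 0 < q)
    (σe σs δ M : ℝ) (hσe : 0 < σe) (hσs : 0 < σs) (hδ : 0 ≤ δ) (hM : 0 < M)
    (hgain : δ < σs)
    (Γ : Matrix (Fin q) (Fin q) ℝ) (hΓ : Γ.PosDef)
    (e e' : ℝ → EuclideanSpace ℝ (Fin n)) (θt θt' : ℝ → EuclideanSpace ℝ (Fin q))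
    (P : ℝ → Matrix (Fin n) (Fin q) ℝ) (d s : ℝ → EuclideanSpace ℝ (Fin n))
    (hPmeas : ∀ i j, Measurable fun t => P t i j) (hdmeas : Measurable d) (hsmeas : Measurable s)
    (hPbound : ∀ t, 0 ≤ t → ∀ v, ‖Matrix.toEuclideanLin (P t) v‖ ≤ M * ‖v‖)
    (hdbound : ∀ t, 0 ≤ t → ‖d t‖ ≤ δ)
    (hsgn : ∀ t, 0 ≤ t → s t ∈ filippovSgn (e t))
    -- local absolute continuity of `e` and `θ̃`:
    (heInt : ∀ t, 0 ≤ t → IntervalIntegrable e' volume 0 t)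
    (hθInt : ∀ t, 0 ≤ t → IntervalIntegrable θt' volume 0 t)
    (heAC : ∀ t, 0 ≤ t → e t = e 0 + ∫ τ in (0 : ℝ)..t, e' τ)
    (hθAC : ∀ t, 0 ≤ t → θt t = θt 0 + ∫ τ in (0 : ℝ)..t, θt' τ)
    -- the closed-loop dynamics and the adaptation law hold for almost every `t ≥ 0`:
    (hdyn : ∀ᵐ t ∂volume, 0 ≤ t →
      e' t = Matrix.toEuclideanLin (P t) (θt t) + d t - σe • e t - σs • s t)
    (hadapt : ∀ᵐ t ∂volume, 0 ≤ t →
      θt' t = -(Matrix.toEuclideanLin (Γ * (P t)ᵀ) (e t)))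
    (α₁ α₂ : ℝ)
    (hα₁ : α₁ = (1 / 2) * min 1 (⨅ i, hΓ.inv.1.eigenvalues i))
    (hα₂ : α₂ = (1 / 2) * max 1 (⨆ i, hΓ.inv.1.eigenvalues i)) :
    (∀ t, 0 ≤ t →
      Real.sqrt (‖e t‖ ^ 2 + ‖θt t‖ ^ 2) ≤
        Real.sqrt (α₂ / α₁) * Real.sqrt (‖e 0‖ ^ 2 + ‖θt 0‖ ^ 2)) ∧
    Filter.Tendsto (fun t => ‖e t‖) Filter.atTop (nhds 0) :=
  resnet_adaptive_control_asymptotic_tracking_general n q hq σe σs δ M hσe hσs hM hgain Γ hΓ e e' θt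
    θt' P d s hPbound hdbound hsgn heInt hθInt heAC hθAC hdyn hadapt α₁ α₂ hα₁ hα₂
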